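/- arXiv:1110.3556 — 2 statements merged into one kernel-verified Lean document; each statement's English description precedes it below -/
import Mathlib

section
/- Fix λ ≥ 0, n ≥ k ≥ 1, an m×n matrix Y and an m×p matrix X. Let S ∈ ℝ^{p×k}, V ∈ 𝕆^{n×k}, and suppose S′ globally minimizes S̃ ↦ ½‖Y V − XS̃‖²_F + λ‖S̃‖_{2,1} over ℝ^{p×k} and V′ globally maximizes Ṽ ↦ tr((Y′XS′)′Ṽ) over 𝕆^{n×k}. Then rank(S′(V′)ᵀ) ≤ k and F(S′, V′) ≤ F(S′, V) ≤ F(S, V); in particular, along the alternating iterates of the algorithm the objective F is nonincreasing. -/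
open Matrix Finset Filter Topology

noncomputable section

/-- Squared Frobenius norm of a matrix. -/
def frobSq {m n : ℕ} (M : Matrix (Fin m) (Fin n) ℝ) : ℝ := ∑ i, ∑ j, (M i j) ^ 2

/-- Frobenius norm. -/
def frobNorm {m n : ℕ} (M : Matrix (Fin m) (Fin n) ℝ) : ℝ := Real.sqrt (frobSq M)

/-- Euclidean norm of a vector. -/
def eNorm {n : ℕ} (v : Fin n → ℝ) : ℝ := Real.sqrt (∑ j, (v j) ^ 2)

/-- Sum of the Euclidean norms of the rows, `‖S‖_{2,1}`. -/
def norm21 {p n : ℕ} (B : Matrix (Fin p) (Fin n) ℝ) : ℝ := ∑ i, eNorm (B i)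

/-- `V` has orthonormal columns: `V ∈ 𝕆^{n×k}`. -/
def IsOrthCol {n k : ℕ} (V : Matrix (Fin n) (Fin k) ℝ) : Prop := Vᵀ * V = 1

/-- The objective `F(S, V) = ½‖Y − XSV′‖²_F + λ‖S‖_{2,1}`. -/
def Fobj {m n p k : ℕ} (Y : Matrix (Fin m) (Fin n) ℝ) (X : Matrix (Fin m) (Fin p) ℝ)
    (lam : ℝ) (S : Matrix (Fin p) (Fin k) ℝ) (V : Matrix (Fin n) (Fin k) ℝ) : ℝ :=
  (1 / 2) * frobSq (Y - X * S * Vᵀ) + lam * norm21 S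



lemma frobSq_eq_trace {m n : ℕ} (M : Matrix (Fin m) (Fin n) ℝ) :
    frobSq M = (Mᵀ * M).trace := by
  simp only [frobSq, Matrix.trace, Matrix.diag, Matrix.mul_apply, Matrix.transpose_apply, sq]
  rw [Finset.sum_comm]

lemma frobSq_sub {m n : ℕ} (A B : Matrix (Fin m) (Fin n) ℝ) :
    frobSq (A - B) = frobSq A - 2 * (Aᵀ * B).trace + frobSq B := by
  simp only [frobSq_eq_trace, Matrix.transpose_sub, Matrix.sub_mul, Matrix.mul_sub,
    Matrix.trace_sub]
  have h : (Bᵀ * A).trace = (Aᵀ * B).trace := by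
    rw [← Matrix.trace_transpose (Bᵀ * A), Matrix.transpose_mul, Matrix.transpose_transpose]
  linarith

lemma trace_aux {m n p k : ℕ} (Y : Matrix (Fin m) (Fin n) ℝ) (X : Matrix (Fin m) (Fin p) ℝ)
    (S : Matrix (Fin p) (Fin k) ℝ) (V : Matrix (Fin n) (Fin k) ℝ) :
    (Yᵀ * (X * S * Vᵀ)).trace = ((Yᵀ * X * S)ᵀ * V).trace := by
  rw [← Matrix.trace_transpose ((Yᵀ * X * S)ᵀ * V), Matrix.transpose_mul,
    Matrix.transpose_transpose, Matrix.trace_mul_comm Vᵀ, ← Matrix.mul_assoc,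
    ← Matrix.mul_assoc]

lemma Fobj_eq_trace {m n p k : ℕ} (Y : Matrix (Fin m) (Fin n) ℝ) (X : Matrix (Fin m) (Fin p) ℝ)
    (lam : ℝ) (S : Matrix (Fin p) (Fin k) ℝ) (V : Matrix (Fin n) (Fin k) ℝ)
    (hV : IsOrthCol V) :
    Fobj Y X lam S V = -((Yᵀ * X * S)ᵀ * V).trace + (1/2) * frobSq Y
      + (1/2) * frobSq (X * S) + lam * norm21 S := by
  have hV1 : Vᵀ * V = 1 := hV
  have h1 : frobSq (X * S * Vᵀ) = frobSq (X * S) := by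
    rw [frobSq_eq_trace, frobSq_eq_trace]
    calc ((X * S * Vᵀ)ᵀ * (X * S * Vᵀ)).trace
        = (V * ((X * S)ᵀ * (X * S * Vᵀ))).trace := by
          rw [Matrix.transpose_mul, Matrix.transpose_transpose, Matrix.mul_assoc]
      _ = (((X * S)ᵀ * (X * S * Vᵀ)) * V).trace := Matrix.trace_mul_comm _ _
      _ = ((X * S)ᵀ * (X * S)).trace := by
          rw [Matrix.mul_assoc, Matrix.mul_assoc, hV1, Matrix.mul_one]
  unfold Fobj
  rw [frobSq_sub, trace_aux, h1]
  ring

lemma Fobj_eq_proj {m n p k : ℕ} (Y : Matrix (Fin m) (Fin n) ℝ) (X : Matrix (Fin m) (Fin p) ℝ)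
    (lam : ℝ) (S : Matrix (Fin p) (Fin k) ℝ) (V : Matrix (Fin n) (Fin k) ℝ)
    (hV : IsOrthCol V) :
    Fobj Y X lam S V = ((1/2) * frobSq (Y * V - X * S) + lam * norm21 S)
      + ((1/2) * frobSq Y - (1/2) * frobSq (Y * V)) := by
  have h3 : ((Y * V)ᵀ * (X * S)).trace = ((Yᵀ * X * S)ᵀ * V).trace := by
    rw [← trace_aux Y X S V, Matrix.transpose_mul, Matrix.mul_assoc,
      Matrix.trace_mul_comm Vᵀ, Matrix.mul_assoc]
  rw [Fobj_eq_trace Y X lam S V hV, frobSq_sub, h3]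
  ring

/-- Lemma 2 (descent of the alternating step and rank bound). -/
theorem stmt12 {m n p k : ℕ} (lam : ℝ) (hlam : 0 ≤ lam) (hk : 1 ≤ k) (hkn : k ≤ n)
    (Y : Matrix (Fin m) (Fin n) ℝ) (X : Matrix (Fin m) (Fin p) ℝ)
    (S S' : Matrix (Fin p) (Fin k) ℝ) (V V' : Matrix (Fin n) (Fin k) ℝ)
    (hV : IsOrthCol V) (hV' : IsOrthCol V')
    (hS'min : ∀ St : Matrix (Fin p) (Fin k) ℝ,
      (1 / 2) * frobSq (Y * V - X * S') + lam * norm21 S' ≤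
        (1 / 2) * frobSq (Y * V - X * St) + lam * norm21 St)
    (hV'max : ∀ Vt : Matrix (Fin n) (Fin k) ℝ, IsOrthCol Vt →
      ((Yᵀ * X * S')ᵀ * Vt).trace ≤ ((Yᵀ * X * S')ᵀ * V').trace) :
    (S' * V'ᵀ).rank ≤ k ∧
      Fobj Y X lam S' V' ≤ Fobj Y X lam S' V ∧
      Fobj Y X lam S' V ≤ Fobj Y X lam S V := by
  refine ⟨?_, ?_, ?_⟩
  · calc (S' * V'ᵀ).rank ≤ S'.rank := Matrix.rank_mul_le_left _ _
      _ ≤ Fintype.card (Fin k) := Matrix.rank_le_card_width _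
      _ = k := Fintype.card_fin k
  · rw [Fobj_eq_trace Y X lam S' V' hV', Fobj_eq_trace Y X lam S' V hV]
    have := hV'max V hV
    linarith
  · rw [Fobj_eq_proj Y X lam S' V hV, Fobj_eq_proj Y X lam S V hV]
    have := hS'min S
    linarith

end
end

section
/- Fix λ > 0, n ≥ k ≥ 1, an m×n matrix Y and an m×p matrix X. Let V_j ∈ 𝕆^{n×k} with V_j → V* ∈ 𝕆^{n×k}, and let S_j ∈ ℝ^{p×k} with S_j → S* ∈ ℝ^{p×k}, such that for every j, S_j globally minimizes S ↦ F(S, V_j) over ℝ^{p×k}. Then S* globally minimizes S ↦ F(S, V*) over ℝ^{p×k}. (That is, the point-to-set map V ↦ argmin_S F(S, V) is closed.) -/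
open Matrix Finset Filter Topology

noncomputable section

open Filter Topology

theorem Continuous.forall_le_of_tendsto_minimizers {ι α β γ : Type*} [TopologicalSpace α]
    [TopologicalSpace β] [TopologicalSpace γ] [Preorder γ] [OrderClosedTopology γ]
    {f : α → β → γ} (hf : Continuous (Function.uncurry f)) {l : Filter ι} [l.NeBot]
    {x : ι → α} {v : ι → β} {x₀ : α} {v₀ : β}
    (hx : Tendsto x l (𝓝 x₀)) (hv : Tendsto v l (𝓝 v₀))
    (hmin : ∀ i y, f (x i) (v i) ≤ f y (v i)) (y : α) : f x₀ v₀ ≤ f y v₀ :=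
  le_of_tendsto_of_tendsto' ((hf.tendsto (x₀, v₀)).comp (hx.prodMk_nhds hv))
    ((hf.tendsto (y, v₀)).comp (tendsto_const_nhds.prodMk_nhds hv)) fun i => hmin i y

@[fun_prop]
theorem continuous_frobSq {m n : ℕ} : Continuous (frobSq : Matrix (Fin m) (Fin n) ℝ → ℝ) := by
  unfold frobSq
  fun_prop

@[fun_prop]
theorem continuous_norm21 {p n : ℕ} : Continuous (norm21 : Matrix (Fin p) (Fin n) ℝ → ℝ) := by
  unfold norm21 eNorm
  fun_prop

theorem continuous_uncurry_Fobj {m n p k : ℕ} (Y : Matrix (Fin m) (Fin n) ℝ)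
    (X : Matrix (Fin m) (Fin p) ℝ) (lam : ℝ) :
    Continuous (Function.uncurry (Fobj (k := k) Y X lam)) := by
  unfold Function.uncurry Fobj
  fun_prop

theorem stmt15_general {m n p k : ℕ} (lam : ℝ)
    (Y : Matrix (Fin m) (Fin n) ℝ) (X : Matrix (Fin m) (Fin p) ℝ)
    (Vseq : ℕ → Matrix (Fin n) (Fin k) ℝ) (Sseq : ℕ → Matrix (Fin p) (Fin k) ℝ)
    (Vstar : Matrix (Fin n) (Fin k) ℝ) (Sstar : Matrix (Fin p) (Fin k) ℝ)
    (hVlim : Tendsto Vseq atTop (𝓝 Vstar)) (hSlim : Tendsto Sseq atTop (𝓝 Sstar))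
    (hSmin : ∀ j, ∀ S : Matrix (Fin p) (Fin k) ℝ,
      Fobj Y X lam (Sseq j) (Vseq j) ≤ Fobj Y X lam S (Vseq j)) :
    ∀ S : Matrix (Fin p) (Fin k) ℝ, Fobj Y X lam Sstar Vstar ≤ Fobj Y X lam S Vstar :=
  (continuous_uncurry_Fobj Y X lam).forall_le_of_tendsto_minimizers hSlim hVlim hSmin

/-- Lemma 4 (closedness of the point-to-set map `V ↦ argmin_S F(S, V)`). -/
theorem stmt15 {m n p k : ℕ} (lam : ℝ) (hlam : 0 < lam) (hk : 1 ≤ k) (hkn : k ≤ n)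
    (Y : Matrix (Fin m) (Fin n) ℝ) (X : Matrix (Fin m) (Fin p) ℝ)
    (Vseq : ℕ → Matrix (Fin n) (Fin k) ℝ) (Sseq : ℕ → Matrix (Fin p) (Fin k) ℝ)
    (Vstar : Matrix (Fin n) (Fin k) ℝ) (Sstar : Matrix (Fin p) (Fin k) ℝ)
    (hVseq : ∀ j, IsOrthCol (Vseq j)) (hVstar : IsOrthCol Vstar)
    (hVlim : Tendsto Vseq atTop (𝓝 Vstar)) (hSlim : Tendsto Sseq atTop (𝓝 Sstar))
    (hSmin : ∀ j, ∀ S : Matrix (Fin p) (Fin k) ℝ,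
      Fobj Y X lam (Sseq j) (Vseq j) ≤ Fobj Y X lam S (Vseq j)) :
    ∀ S : Matrix (Fin p) (Fin k) ℝ, Fobj Y X lam Sstar Vstar ≤ Fobj Y X lam S Vstar :=
  stmt15_general lam Y X Vseq Sseq Vstar Sstar hVlim hSlim hSmin

end
end
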